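/- arXiv:1709.10342 — 2 statements merged into one kernel-verified Lean document; each statement's English description precedes it below -/
import Mathlib

section
/- Let 𝔫 be the 13-dimensional nilpotent Lie algebra with basis X₁,…,X₇, Y₁,…,Y₅, Z and nonzero basis brackets (up to antisymmetry) [X₁,X₃]=X₄, [X₁,X₄]=X₅, [X₁,X₅]=X₆, [X₁,X₆]=X₇, [X₂,X₃]=X₅, [X₂,X₄]=X₆, [X₃,X₄]=−X₇, [X₂,X₅]=X₇, [Y₁,Y₂]=Y₃, [Y₁,Y₃]=Y₄, [Y₁,Y₄]=Y₅, [Y₂,Y₃]=Y₅, [X₂,Y₁]=Z, [X₃,Y₂]=Z. Then: (a) the diagonal map D = Diag(1,2,3,4,5,6,7,−1,−2,−3,−4,−5,1) (with respect to the ordered basis X₁,…,X₇,Y₁,…,Y₅,Z) is an invertible derivation of 𝔫; (b) the center of 𝔫 is spanned by X₇, Y₅, Z, and the restriction of D to the center is Diag(7,−5,1); (c) every derivation of 𝔫 which is diagonalizable over ℝ and commutes with D is a real scalar multiple of D. -/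
open scoped BigOperators

namespace RNPaper

/-- Structure constants of a skew-symmetric algebra on `ℝⁿ`:
an element of `V = Λ²(ℝⁿ)*⊗ℝⁿ` written in the basis `μ_{ijk}`. -/
abbrev SC (n : ℕ) := Fin n → Fin n → Fin n → ℝ

variable {n : ℕ}

def IsAntisym (c : SC n) : Prop := ∀ i j k, c j i k = - c i j k

/-- The bilinear map `ℝⁿ×ℝⁿ→ℝⁿ` associated to the structure constants `c`. -/
def br (c : SC n) (x y : Fin n → ℝ) : Fin n → ℝ :=
  fun k => ∑ i, ∑ j, x i * y j * c i j k

def IsJacobi (c : SC n) : Prop :=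
  ∀ x y z : Fin n → ℝ,
    br c (br c x y) z + br c (br c y z) x + br c (br c z x) y = 0

def nest (c : SC n) (v : ℕ → (Fin n → ℝ)) : ℕ → (Fin n → ℝ)
  | 0 => v 0
  | k + 1 => br c (v (k + 1)) (nest c v k)

def IsNilpotentBracket (c : SC n) : Prop :=
  ∃ N : ℕ, ∀ v : ℕ → (Fin n → ℝ), nest c v N = 0

/-- `c` is the Lie bracket of a nilpotent Lie algebra. -/
def IsNilpotentLie (c : SC n) : Prop := IsAntisym c ∧ IsJacobi c ∧ IsNilpotentBracket c

/-- `D` is a derivation of the algebra with structure constants `c`. -/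
def IsDeriv (c : SC n) (D : Matrix (Fin n) (Fin n) ℝ) : Prop :=
  ∀ x y : Fin n → ℝ,
    D.mulVec (br c x y) = br c (D.mulVec x) y + br c x (D.mulVec y)

/-- The inner product on `V` making the basis `μ_{ijk}` (`i<j`) orthonormal. -/
def innerV (c d : SC n) : ℝ := ∑ i, ∑ j, ∑ k, if i < j then c i j k * d i j k else 0

/-- The inner product `⟨A,B⟩ = tr(ABᵀ)` on matrices. -/
def innerM (A B : Matrix (Fin n) (Fin n) ℝ) : ℝ := ∑ a, ∑ b, A a b * B a b

/-- The `gl(n,ℝ)`-action `E·μ = Eμ(·,·) − μ(E·,·) − μ(·,E·)`. -/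
def lieAct (E : Matrix (Fin n) (Fin n) ℝ) (c : SC n) : SC n :=
  fun i j k => (∑ l, E k l * c i j l) - (∑ p, E p i * c p j k) - (∑ p, E p j * c i p k)

/-- The `GL(n,ℝ)`-action `(g·μ)(v,w) = g μ(g⁻¹v, g⁻¹w)` in structure constants. -/
def glAct (g : GL (Fin n) ℝ) (c : SC n) : SC n :=
  fun i j k => ∑ p, ∑ q, ∑ l,
    ((g⁻¹ : GL (Fin n) ℝ) : Matrix (Fin n) (Fin n) ℝ) p i
      * ((g⁻¹ : GL (Fin n) ℝ) : Matrix (Fin n) (Fin n) ℝ) q j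
      * ((g : Matrix (Fin n) (Fin n) ℝ) k l) * c p q l

/-- `m` is the moment map: `⟨m(μ),E⟩ = |μ|⁻²⟨E·μ,μ⟩` for all symmetric `E` and `μ ≠ 0`,
with `m(μ)` a symmetric matrix. -/
def IsMomentMap (m : SC n → Matrix (Fin n) (Fin n) ℝ) : Prop :=
  ∀ c : SC n, c ≠ 0 →
    (m c).IsSymm ∧
      ∀ E : Matrix (Fin n) (Fin n) ℝ, E.IsSymm →
        innerM (m c) E = (innerV c c)⁻¹ * innerV (lieAct E c) c

/-- The centralizer of `D` in `GL(n,ℝ)`. -/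
def centralizerSet (D : Matrix (Fin n) (Fin n) ℝ) : Set (GL (Fin n) ℝ) :=
  {g | (g : Matrix (Fin n) (Fin n) ℝ) * D = D * (g : Matrix (Fin n) (Fin n) ℝ)}

lemma one_mem_centralizerSet (D : Matrix (Fin n) (Fin n) ℝ) :
    (1 : GL (Fin n) ℝ) ∈ centralizerSet D := by
  simp [centralizerSet]

/-- `G_D`: the identity component of the centralizer of `D` in `GL(n,ℝ)`. -/
def GD (D : Matrix (Fin n) (Fin n) ℝ) : Set (GL (Fin n) ℝ) :=
  Subtype.val '' connectedComponent (⟨1, one_mem_centralizerSet D⟩ : centralizerSet D)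

/-- The orbit of `c` under a set `S ⊆ GL(n,ℝ)`. -/
def orbitOf (S : Set (GL (Fin n) ℝ)) (c : SC n) : Set (SC n) :=
  (fun g => glAct g c) '' S

noncomputable def diagAct (d : Fin n → ℝ) (c : SC n) : SC n :=
  fun i j k => (d k / (d i * d j)) * c i j k

/-- The orbit `T·μ` of the subgroup of diagonal matrices with positive entries. -/
def Torbit (c : SC n) : Set (SC n) :=
  {x | ∃ d : Fin n → ℝ, (∀ i, 0 < d i) ∧ x = diagAct d c}

/-- The weight `F_{ij}^k = E_kk − E_ii − E_jj`. -/
def Fwt (i j k : Fin n) : Matrix (Fin n) (Fin n) ℝ :=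
  Matrix.single k k 1 - Matrix.single i i 1 - Matrix.single j j 1

/-- `CH_μ`: the convex hull of the weights of `μ`. -/
def CHmu (c : SC n) : Set (Matrix (Fin n) (Fin n) ℝ) :=
  convexHull ℝ {M | ∃ i j k : Fin n, i < j ∧ c i j k ≠ 0 ∧ M = Fwt i j k}

/-- The diagonal part of a matrix. -/
def diagPart (A : Matrix (Fin n) (Fin n) ℝ) : Matrix (Fin n) (Fin n) ℝ :=
  Matrix.diagonal fun i => A i i

/-- Membership in `𝔱ⁿ_{>0}`, the diagonal matrices with positive diagonal entries. -/
def DiagPos (E : Matrix (Fin n) (Fin n) ℝ) : Prop :=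
  ∃ d : Fin n → ℝ, (∀ i, 0 < d i) ∧ E = Matrix.diagonal d

/-- The basis is nice for the bracket `c`. -/
def IsNice (c : SC n) : Prop :=
  (∀ i j k l, c i j k ≠ 0 → c i j l ≠ 0 → k = l) ∧
  ∀ i j r s k, c i j k ≠ 0 → c r s k ≠ 0 →
    ({i, j} : Finset (Fin n)) = {r, s} ∨
      Disjoint ({i, j} : Finset (Fin n)) ({r, s} : Finset (Fin n))

/-- `A` is diagonalizable over `ℝ`. -/
def IsDiagonalizableR {N : ℕ} (A : Matrix (Fin N) (Fin N) ℝ) : Prop :=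
  ∃ g : GL (Fin N) ℝ, ∃ d : Fin N → ℝ,
    A = (g : Matrix (Fin N) (Fin N) ℝ) * Matrix.diagonal d
      * ((g⁻¹ : GL (Fin N) ℝ) : Matrix (Fin N) (Fin N) ℝ)

/-- `D` extended by zero to `𝔰_D = ℝf ⊕ 𝔫` (index `0` corresponds to `f`). -/
def Dext (D : Matrix (Fin n) (Fin n) ℝ) : Matrix (Fin (n + 1)) (Fin (n + 1)) ℝ :=
  Matrix.of (Fin.cons (fun _ => (0 : ℝ)) (fun k => Fin.cons (0 : ℝ) (fun j => D k j)))

/-- The bracket of `𝔫` extended by zero to `𝔰_D = ℝf ⊕ 𝔫`. -/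
def cext (c : SC n) : SC (n + 1) :=
  Fin.cons (fun _ _ => 0)
    (fun i => Fin.cons (fun _ => 0) (fun j => Fin.cons 0 (fun k => c i j k)))

/-- Structure constants of the solvable extension `𝔰_D = ℝf ⊕ 𝔫`, `[f,X] = D X`. -/
def solvSC (D : Matrix (Fin n) (Fin n) ℝ) (c : SC n) : SC (n + 1) :=
  fun i j k =>
    (if i = 0 then Dext D k j else 0) - (if j = 0 then Dext D k i else 0) + cext c i j k

/-- The matrix of `ad X`. -/
def adM {N : ℕ} (γ : SC N) (X : Fin N → ℝ) : Matrix (Fin N) (Fin N) ℝ :=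
  Matrix.of fun k j => ∑ i, X i * γ i j k

/-- The bilinear form with Gram matrix `P`. -/
def bip {N : ℕ} (P : Matrix (Fin N) (Fin N) ℝ) (x y : Fin N → ℝ) : ℝ :=
  dotProduct x (P.mulVec y)

/-- `⟨Ric X,Y⟩` computed via the orthonormal basis `u`:
`−½Σ⟨[X,uₐ],[Y,uₐ]⟩ + ¼ΣΣ⟨[uₐ,u_b],X⟩⟨[uₐ,u_b],Y⟩ − ½ tr(ad X ∘ ad Y)
 − ½(⟨[H,X],Y⟩+⟨[H,Y],X⟩)`. -/
noncomputable def ricForm {N : ℕ} (γ : SC N) (P : Matrix (Fin N) (Fin N) ℝ)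
    (u : Fin N → (Fin N → ℝ)) (H : Fin N → ℝ) (X Y : Fin N → ℝ) : ℝ :=
  -(1 / 2) * (∑ a, bip P (br γ X (u a)) (br γ Y (u a)))
    + (1 / 4) * (∑ a, ∑ b, bip P (br γ (u a) (u b)) X * bip P (br γ (u a) (u b)) Y)
    - (1 / 2) * Matrix.trace (adM γ X * adM γ Y)
    - (1 / 2) * (bip P (br γ H X) Y + bip P (br γ H Y) X)

/-- `D` is a Ricci negative derivation of `𝔫`: the solvable extension `𝔰_D = ℝf ⊕ 𝔫`
admits an inner product (with Gram matrix `P`) such that `f ⟂ 𝔫`, `D` is symmetric,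
and the Ricci operator is negative definite. -/
def IsRicciNegative (c : SC n) (D : Matrix (Fin n) (Fin n) ℝ) : Prop :=
  ∃ P : Matrix (Fin (n + 1)) (Fin (n + 1)) ℝ, P.PosDef ∧
    (∀ j : Fin n, P 0 j.succ = 0) ∧
    (Dext D).transpose * P = P * Dext D ∧
    ∃ u : Fin (n + 1) → (Fin (n + 1) → ℝ),
      (∀ a b, bip P (u a) (u b) = if a = b then 1 else 0) ∧
      ∃ H : Fin (n + 1) → ℝ,
        (∀ X : Fin (n + 1) → ℝ, bip P H X = Matrix.trace (adM (solvSC D c) X)) ∧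
        ∀ X : Fin (n + 1) → ℝ, X ≠ 0 → ricForm (solvSC D c) P u H X X < 0

/-- The bracket `[e_i,e_j] = v e_k` (and `[e_j,e_i] = −v e_k`) as an element of `V`. -/
def brk {N : ℕ} (i j k : Fin N) (v : ℝ) : SC N :=
  fun p q r =>
    if p = i ∧ q = j ∧ r = k then v else if p = j ∧ q = i ∧ r = k then -v else 0


/-- The center `𝔷(𝔫) = {x : [x,𝔫] = 0}`. -/
def centerSet {N : ℕ} (c : SC N) : Set (Fin N → ℝ) := {x | ∀ y, br c x y = 0}

/-- Proposition 4.4 (i): basis `X₁,…,X₇ = e₀,…,e₆`, `Y₁,…,Y₅ = e₇,…,e₁₁`, `Z = e₁₂`. -/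
def c18 : SC 13 :=
  brk 0 2 3 1 + brk 0 3 4 1 + brk 0 4 5 1 + brk 0 5 6 1 +
    brk 1 2 4 1 + brk 1 3 5 1 + brk 2 3 6 (-1) + brk 1 4 6 1 +
    brk 7 8 9 1 + brk 7 9 10 1 + brk 7 10 11 1 + brk 8 9 11 1 +
    brk 1 7 12 1 + brk 2 8 12 1

noncomputable def D18 : Matrix (Fin 13) (Fin 13) ℝ :=
  Matrix.diagonal ![1, 2, 3, 4, 5, 6, 7, -1, -2, -3, -4, -5, 1]

/-! `D18` is the diagonal derivation with weights `w = (1, …, 7, -1, …, -5, 1)`: every bracket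
`[e_i, e_j] = ± e_k` of `c18` has `w_k = w_i + w_j`. Conversely, a derivation `D` commuting with
`D18` preserves its eigenspaces, which are lines except for the weight-one plane `⟨X₁, Z⟩`. Its
diagonal entries satisfy `d_k = d_i + d_j` along the brackets, and the solutions of this linear
system are the multiples `t • w`. The relation `[Z, X₃] = 0` kills the `X₁`-component of `D Z`.
The `Z`-component `s` of `D X₁` is not constrained by the brackets, as `X₁ ∉ [𝔫, 𝔫]`; it vanishes
by diagonalizability, because `D - t` maps `X₁ ↦ s Z ↦ 0`. -/

lemma br_sc_add (c₁ c₂ : SC n) (x y : Fin n → ℝ) :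
    br (c₁ + c₂) x y = br c₁ x y + br c₂ x y := by
  funext k
  simp only [br, Pi.add_apply, mul_add, Finset.sum_add_distrib]

lemma br_single_right (c : SC n) (x : Fin n → ℝ) (j k : Fin n) :
    br c x (Pi.single j 1) k = ∑ i, x i * c i j k := by
  simp [br, Pi.single_apply]

lemma br_single_single (c : SC n) (i j : Fin n) :
    br c (Pi.single i 1) (Pi.single j 1) = fun k => c i j k := by
  funext k
  simp [br_single_right, Pi.single_apply]

lemma br_smul_left (c : SC n) (a : ℝ) (x y : Fin n → ℝ) :
    br c (a • x) y = a • br c x y := by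
  funext k
  simp only [br, Pi.smul_apply, smul_eq_mul, Finset.mul_sum, mul_assoc]

lemma br_add_left (c : SC n) (x₁ x₂ y : Fin n → ℝ) :
    br c (x₁ + x₂) y = br c x₁ y + br c x₂ y := by
  funext k
  simp only [br, Pi.add_apply, add_mul, Finset.sum_add_distrib]

def centerSubmodule (c : SC n) : Submodule ℝ (Fin n → ℝ) where
  carrier := centerSet c
  add_mem' hx hy z := by rw [br_add_left, hx z, hy z, add_zero]
  zero_mem' z := by simpa using br_smul_left c 0 0 z
  smul_mem' a x hx z := by rw [br_smul_left, hx z, smul_zero]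

lemma single_mem_centerSet {c : SC n} {m : Fin n} (h : ∀ j k, c m j k = 0) :
    Pi.single m 1 ∈ centerSet c := by
  intro y
  funext k
  simp [br, Pi.single_apply, h]

lemma IsDeriv.add {c₁ c₂ : SC n} {D : Matrix (Fin n) (Fin n) ℝ} (h₁ : IsDeriv c₁ D)
    (h₂ : IsDeriv c₂ D) : IsDeriv (c₁ + c₂) D := by
  intro x y
  simp only [br_sc_add, Matrix.mulVec_add, h₁ x y, h₂ x y]
  abel

lemma isDeriv_diagonal {c : SC n} {d : Fin n → ℝ}
    (h : ∀ i j k, d k * c i j k = (d i + d j) * c i j k) : IsDeriv c (Matrix.diagonal d) := by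
  intro x y
  funext k
  simp only [Matrix.mulVec_diagonal, br, Pi.add_apply, Finset.mul_sum, ← Finset.sum_add_distrib]
  refine Finset.sum_congr rfl fun i _ => Finset.sum_congr rfl fun j _ => ?_
  linear_combination (x i * y j) * h i j k

lemma isDeriv_brk_diagonal {i j k : Fin n} {d : Fin n → ℝ} (v : ℝ) (h : d k = d i + d j) :
    IsDeriv (brk i j k v) (Matrix.diagonal d) := by
  refine isDeriv_diagonal fun p q r => ?_
  simp only [brk]
  split_ifs with h₁ h₂
  · obtain ⟨rfl, rfl, rfl⟩ := h₁; rw [h]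
  · obtain ⟨rfl, rfl, rfl⟩ := h₂; rw [h]; ring
  · ring

lemma IsDeriv.structConst_eq {c : SC n} {D : Matrix (Fin n) (Fin n) ℝ} (hD : IsDeriv c D)
    (i j k : Fin n) :
    ∑ l, D k l * c i j l = ∑ p, D p i * c p j k + ∑ p, D p j * c i p k := by
  have h := congrFun (hD (Pi.single i 1) (Pi.single j 1)) k
  simp only [br_single_single, Matrix.mulVec_single_one, Pi.add_apply, br_single_right] at h
  simpa [Matrix.mulVec, dotProduct, br, Pi.single_apply] using h

lemma apply_eq_zero_of_mul_diagonal_eq_diagonal_mul {A : Matrix (Fin n) (Fin n) ℝ} {d : Fin n → ℝ}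
    (h : A * Matrix.diagonal d = Matrix.diagonal d * A) {i j : Fin n} (hij : d i ≠ d j) :
    A i j = 0 := by
  have hij' := congrFun (congrFun h i) j
  rw [Matrix.mul_diagonal, Matrix.diagonal_mul] at hij'
  have : A i j * (d j - d i) = 0 := by linear_combination hij'
  exact (mul_eq_zero.mp this).resolve_right (sub_ne_zero.mpr hij.symm)

lemma IsDiagonalizableR.sub_smul_one {A : Matrix (Fin n) (Fin n) ℝ} (hA : IsDiagonalizableR A)
    (μ : ℝ) : IsDiagonalizableR (A - μ • 1) := by
  obtain ⟨g, d, rfl⟩ := hA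
  refine ⟨g, fun i => d i - μ, ?_⟩
  have hμ : (g : Matrix (Fin n) (Fin n) ℝ) * (μ • 1) * ((g⁻¹ : GL (Fin n) ℝ) : Matrix _ _ ℝ)
      = μ • 1 := by
    rw [Matrix.mul_smul, Matrix.mul_one, Matrix.smul_mul, Units.mul_inv]
  rw [← Matrix.diagonal_sub, ← Matrix.smul_one_eq_diagonal, Matrix.mul_sub, Matrix.sub_mul, hμ]

open Matrix in
lemma IsDiagonalizableR.mulVec_eq_zero_of_mulVec_mulVec_eq_zero {A : Matrix (Fin n) (Fin n) ℝ}
    (hA : IsDiagonalizableR A) {v : Fin n → ℝ} (hv : A *ᵥ (A *ᵥ v) = 0) : A *ᵥ v = 0 := by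
  obtain ⟨g, d, rfl⟩ := hA
  set G : Matrix (Fin n) (Fin n) ℝ := (g : Matrix (Fin n) (Fin n) ℝ)
  set G' : Matrix (Fin n) (Fin n) ℝ := ((g⁻¹ : GL (Fin n) ℝ) : Matrix (Fin n) (Fin n) ℝ)
  have hG'G : G' * G = 1 := Units.inv_mul g
  have hcancel : ∀ u, G' *ᵥ (G *ᵥ u) = u := fun u => by
    rw [mulVec_mulVec, hG'G, one_mulVec]
  have hconj : ∀ u, (G * diagonal d * G') *ᵥ u = G *ᵥ (d * (G' *ᵥ u)) := fun u => by
    rw [← mulVec_mulVec, ← mulVec_mulVec]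
    congr 1
    exact funext (mulVec_diagonal d _)
  have hdd : d * (d * (G' *ᵥ v)) = 0 := by
    simpa only [hconj, hcancel, mulVec_zero] using congrArg (G' *ᵥ ·) hv
  have hd : d * (G' *ᵥ v) = 0 := funext fun i => by
    simpa [← mul_assoc, mul_self_eq_zero] using congrFun hdd i
  rw [hconj, hd, mulVec_zero]

lemma diagonal_mulVec_single_one (d : Fin n → ℝ) (i : Fin n) :
    (Matrix.diagonal d).mulVec (Pi.single i 1) = d i • Pi.single i 1 := by
  rw [Matrix.diagonal_mulVec_single, ← Pi.single_smul', smul_eq_mul]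

lemma isDeriv_c18_D18 : IsDeriv c18 D18 := by
  unfold c18 D18
  -- `with_reducible` keeps `brk` folded, so that only the sum of the fourteen brackets is split
  repeat' with_reducible refine IsDeriv.add ?_ ?_
  all_goals exact isDeriv_brk_diagonal _ (by simp; norm_num)

lemma isUnit_D18 : IsUnit D18 := by
  rw [D18, Matrix.isUnit_diagonal, Pi.isUnit_iff]
  intro i
  fin_cases i <;> norm_num

lemma centerSet_c18 : centerSet c18 = (Submodule.span ℝ
    ({Pi.single (6 : Fin 13) (1 : ℝ), Pi.single (11 : Fin 13) (1 : ℝ),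
      Pi.single (12 : Fin 13) (1 : ℝ)} : Set (Fin 13 → ℝ)) : Set (Fin 13 → ℝ)) := by
  refine Set.Subset.antisymm (fun x hx => ?_) ?_
  · have hx' : ∀ j k, ∑ i, x i * c18 i j k = 0 := fun j k => by
      rw [← br_single_right]; exact congrFun (hx _) k
    -- `x p` is the only coefficient of `[x, e_j]` along `e_k`
    have h0 : x 0 = 0 := by simpa [c18, brk] using hx' 2 3
    have h1 : x 1 = 0 := by simpa [c18, brk] using hx' 2 4
    have h2 : x 2 = 0 := by simpa [c18, brk] using hx' 8 12
    have h3 : x 3 = 0 := by simpa [c18, brk] using hx' 0 4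
    have h4 : x 4 = 0 := by simpa [c18, brk] using hx' 0 5
    have h5 : x 5 = 0 := by simpa [c18, brk] using hx' 0 6
    have h7 : x 7 = 0 := by simpa [c18, brk] using hx' 8 9
    have h8 : x 8 = 0 := by simpa [c18, brk] using hx' 7 9
    have h9 : x 9 = 0 := by simpa [c18, brk] using hx' 7 10
    have h10 : x 10 = 0 := by simpa [c18, brk] using hx' 7 11
    have hxe : x = x 6 • Pi.single (6 : Fin 13) (1 : ℝ) + x 11 • Pi.single (11 : Fin 13) (1 : ℝ)
        + x 12 • Pi.single (12 : Fin 13) (1 : ℝ) := by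
      funext m
      fin_cases m <;> simp [h0, h1, h2, h3, h4, h5, h7, h8, h9, h10]
    rw [SetLike.mem_coe, hxe]
    refine add_mem (add_mem ?_ ?_) ?_ <;>
      exact Submodule.smul_mem _ _ (Submodule.subset_span (by simp))
  · refine fun x hx => (Submodule.span_le (p := centerSubmodule c18)).mpr ?_ hx
    rintro _ (rfl | rfl | rfl) <;> exact single_mem_centerSet fun j k => by simp [c18, brk]

-- The weights of `D18` as integers, so that finite checks on them can be `decide`d.
def w18 : Fin 13 → ℤ := ![1, 2, 3, 4, 5, 6, 7, -1, -2, -3, -4, -5, 1]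

lemma D18_eq_diagonal_w18 : D18 = Matrix.diagonal fun i => (w18 i : ℝ) := by
  rw [D18]
  congr 1
  funext i
  fin_cases i <;> simp [w18]

lemma IsDeriv.c18_apply_self {D : Matrix (Fin 13) (Fin 13) ℝ} (hD : IsDeriv c18 D) (i : Fin 13) :
    D i i = D 0 0 * w18 i := by
  have e₁ := hD.structConst_eq 0 2 3
  have e₂ := hD.structConst_eq 0 3 4
  have e₃ := hD.structConst_eq 0 4 5
  have e₄ := hD.structConst_eq 0 5 6
  have e₅ := hD.structConst_eq 1 2 4
  have e₆ := hD.structConst_eq 2 3 6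
  have e₇ := hD.structConst_eq 7 8 9
  have e₈ := hD.structConst_eq 7 9 10
  have e₉ := hD.structConst_eq 7 10 11
  have e₁₀ := hD.structConst_eq 8 9 11
  have e₁₁ := hD.structConst_eq 1 7 12
  have e₁₂ := hD.structConst_eq 2 8 12
  simp [c18, brk] at e₁ e₂ e₃ e₄ e₅ e₆ e₇ e₈ e₉ e₁₀ e₁₁ e₁₂
  fin_cases i <;> simp [w18] <;> linarith

lemma IsDeriv.c18_apply_zero_twelve {D : Matrix (Fin 13) (Fin 13) ℝ} (hD : IsDeriv c18 D) :
    D 0 12 = 0 := by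
  have h := hD.structConst_eq 12 2 3
  simp [c18, brk] at h
  exact h.symm

open Matrix in
lemma IsDeriv.eq_smul_D18 {D : Matrix (Fin 13) (Fin 13) ℝ} (hD : IsDeriv c18 D)
    (hdiag : IsDiagonalizableR D) (hcomm : D * D18 = D18 * D) : D = D 0 0 • D18 := by
  rw [D18_eq_diagonal_w18] at hcomm ⊢
  have hz : ∀ i j, w18 i ≠ w18 j → D i j = 0 := fun i j h =>
    apply_eq_zero_of_mul_diagonal_eq_diagonal_mul hcomm (by exact_mod_cast h)
  have h120 : D 12 0 = 0 := by
    have hB0 : (D - (D 0 0) • 1) *ᵥ Pi.single 0 1 = D 12 0 • Pi.single 12 1 := by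
      funext k
      fin_cases k <;> simp [one_apply] <;> exact hz _ _ (by decide)
    have hB12 : (D - (D 0 0) • 1) *ᵥ Pi.single 12 1 = 0 := by
      funext k
      fin_cases k <;> simp [one_apply, w18, hD.c18_apply_zero_twelve, hD.c18_apply_self 12] <;>
        exact hz _ _ (by decide)
    have hB0_zero := (hdiag.sub_smul_one (D 0 0)).mulVec_eq_zero_of_mulVec_mulVec_eq_zero
      (v := Pi.single 0 1) (by rw [hB0, mulVec_smul, hB12, smul_zero])
    simpa [hB0] using congrFun hB0_zero 12
  ext i j
  rcases eq_or_ne i j with rfl | hij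
  · simp [hD.c18_apply_self i]
  · rw [Matrix.smul_apply, diagonal_apply_ne _ hij, smul_zero]
    by_cases hw : w18 i = w18 j
    · have : (i = 0 ∧ j = 12) ∨ (i = 12 ∧ j = 0) := by revert i j; decide
      rcases this with ⟨rfl, rfl⟩ | ⟨rfl, rfl⟩
      exacts [hD.c18_apply_zero_twelve, h120]
    · exact hz i j hw

theorem statement18 :
    (IsDeriv c18 D18 ∧ IsUnit D18) ∧
    (centerSet c18 = (Submodule.span ℝ
        ({Pi.single (6 : Fin 13) (1 : ℝ), Pi.single (11 : Fin 13) (1 : ℝ),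
          Pi.single (12 : Fin 13) (1 : ℝ)} : Set (Fin 13 → ℝ)) : Set (Fin 13 → ℝ)) ∧
      D18.mulVec (Pi.single (6 : Fin 13) 1) =
        (7 : ℝ) • (Pi.single (6 : Fin 13) (1 : ℝ) : Fin 13 → ℝ) ∧
      D18.mulVec (Pi.single (11 : Fin 13) 1) =
        (-5 : ℝ) • (Pi.single (11 : Fin 13) (1 : ℝ) : Fin 13 → ℝ) ∧
      D18.mulVec (Pi.single (12 : Fin 13) 1) =
        (1 : ℝ) • (Pi.single (12 : Fin 13) (1 : ℝ) : Fin 13 → ℝ)) ∧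
    (∀ D' : Matrix (Fin 13) (Fin 13) ℝ, IsDeriv c18 D' → IsDiagonalizableR D' →
      D' * D18 = D18 * D' → ∃ t : ℝ, D' = t • D18) := by
  refine ⟨⟨isDeriv_c18_D18, isUnit_D18⟩, ⟨centerSet_c18, ?_, ?_, ?_⟩,
    fun D' hD' hdiag hcomm => ⟨D' 0 0, hD'.eq_smul_D18 hdiag hcomm⟩⟩ <;>
  · rw [D18, diagonal_mulVec_single_one]
    congr 1

end RNPaper
end

section
/- Let 𝔫₁ be the 12-dimensional nilpotent Lie algebra with basis X₁,X₂,X₃, Y₁,Y₂,Y₃, Z₁,Z₂,Z₃, U₁,U₂,U₃ and nonzero basis brackets (up to antisymmetry) [X₁,X₂]=Y₁, [X₂,X₃]=Y₂, [X₃,X₁]=Y₃, [X₁,Y₁]=Z₁, [X₂,Y₂]=Z₂, [X₃,Y₃]=Z₃, [X₁,Z₁]=U₁, [X₂,Z₂]=U₂, [X₃,Z₃]=U₃, [X₁,Y₃]=U₃, [X₂,Y₁]=U₁, [X₃,Y₂]=U₂. Then every derivation D of 𝔫₁ satisfies D(𝔫₁) ⊆ [𝔫₁,𝔫₁]; consequently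 every derivation of 𝔫₁ is nilpotent, i.e. 𝔫₁ is characteristically nilpotent, even though the given basis is nice. -/
open scoped BigOperators

namespace RNPaper

variable {n : ℕ}

/-- Example 4.6 (ex4), first algebra `𝔫₁`: basis `X₁,X₂,X₃ = e₀,e₁,e₂`,
`Y₁,Y₂,Y₃ = e₃,e₄,e₅`, `Z₁,Z₂,Z₃ = e₆,e₇,e₈`, `U₁,U₂,U₃ = e₉,e₁₀,e₁₁`. -/
def c19 : SC 12 :=
  brk 0 1 3 1 + brk 1 2 4 1 + brk 2 0 5 1 +
    brk 0 3 6 1 + brk 1 4 7 1 + brk 2 5 8 1 +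
    brk 0 6 9 1 + brk 1 7 10 1 + brk 2 8 11 1 +
    brk 0 5 11 1 + brk 1 3 9 1 + brk 2 4 10 1

/-!
Give `X, Y, Z, U` the layers `0, 1, 2, 3`. A bracket `[eᵢ, eⱼ]` only has components in layers
above `layer i + layer j`, and every basis vector of positive layer is a bracket of two basis
vectors whose layers add up to one less. Hence a
derivation sending each `Xᵢ` into positive layers raises every layer by at least one: its image
lies in `[𝔫₁, 𝔫₁]` and its fourth power vanishes.

On the `X`-block, the diagonal entries `dₖ = D k k` are additive along the brackets of `𝔫₁`, and
the double description `U₁ = [X₁, Z₁] = [X₂, Y₁]` (and its cyclic images) gives `d₂ = 2d₁`,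
`d₃ = 2d₂`, `d₁ = 2d₃`, so `7d₁ = 0`. The off-diagonal entries are read off from brackets
`[Xᵢ, Yⱼ] = 0`.
-/

open Matrix

lemma br_add (c d : SC n) (x y : Fin n → ℝ) : br (c + d) x y = br c x y + br d x y := by
  ext k
  simp only [br, Pi.add_apply, mul_add, Finset.sum_add_distrib]

lemma br_brk {i j : Fin n} (hij : i ≠ j) (k : Fin n) (v : ℝ) (x y : Fin n → ℝ) :
    br (brk i j k v) x y = Pi.single k (v * (x i * y j - x j * y i)) := by
  ext r
  by_cases hr : r = k
  · subst hr
    have hsplit : ∀ p q, brk i j r v p q r =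
        (if p = i then if q = j then v else 0 else 0) +
          (if p = j then if q = i then -v else 0 else 0) := by
      intro p q
      simp only [brk, and_true]
      split_ifs <;> simp_all
    simp [br, hsplit, mul_add, Finset.sum_add_distrib, mul_ite]
    ring
  · simp [br, brk, hr]

lemma IsDeriv.apply_single {c : SC n} {D : Matrix (Fin n) (Fin n) ℝ} (hD : IsDeriv c D)
    (i j m : Fin n) :
    (D *ᵥ br c (Pi.single i 1) (Pi.single j 1)) m =
      br c (D.col i) (Pi.single j 1) m + br c (Pi.single i 1) (D.col j) m := by
  simpa [mulVec_single_one] using congrFun (hD (Pi.single i 1) (Pi.single j 1)) m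

lemma isNice_of_support {c : SC n} (T : Finset (Fin n × Fin n × Fin n))
    (hT : ∀ i j k, c i j k ≠ 0 → (i, j, k) ∈ T ∨ (j, i, k) ∈ T)
    (h1 : ∀ t ∈ T, ∀ t' ∈ T, ({t.1, t.2.1} : Finset (Fin n)) = {t'.1, t'.2.1} → t.2.2 = t'.2.2)
    (h2 : ∀ t ∈ T, ∀ t' ∈ T, t.2.2 = t'.2.2 →
      ({t.1, t.2.1} : Finset (Fin n)) = {t'.1, t'.2.1} ∨
        Disjoint ({t.1, t.2.1} : Finset (Fin n)) {t'.1, t'.2.1}) :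
    IsNice c := by
  have hT' : ∀ i j k, c i j k ≠ 0 →
      ∃ t ∈ T, ({t.1, t.2.1} : Finset (Fin n)) = {i, j} ∧ t.2.2 = k := by
    intro i j k h
    rcases hT i j k h with h | h
    · exact ⟨_, h, rfl, rfl⟩
    · exact ⟨_, h, Finset.pair_comm _ _, rfl⟩
  constructor
  · intro i j k l hk hl
    obtain ⟨t, ht, hp, rfl⟩ := hT' i j k hk
    obtain ⟨t', ht', hp', rfl⟩ := hT' i j l hl
    exact h1 t ht t' ht' (hp.trans hp'.symm)
  · intro i j r s k h h'
    obtain ⟨t, ht, hp, rfl⟩ := hT' i j k h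
    obtain ⟨t', ht', hp', hk⟩ := hT' r s _ h'
    rw [← hp, ← hp']
    exact h2 t ht t' ht' hk.symm

section LayerFiltration

variable (layer : Fin n → ℕ)

def layerFiltration (m : ℕ) : Submodule ℝ (Fin n → ℝ) where
  carrier := {x | ∀ a, layer a < m → x a = 0}
  add_mem' hx hy a ha := by simp [hx a ha, hy a ha]
  zero_mem' _ _ := rfl
  smul_mem' r x hx a ha := by simp [hx a ha]

variable {layer}

lemma layerFiltration_anti {m m' : ℕ} (h : m ≤ m') :
    layerFiltration layer m' ≤ layerFiltration layer m :=
  fun _ hx a ha => hx a (ha.trans_le h)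

lemma single_mem_layerFiltration (a : Fin n) (r : ℝ) :
    Pi.single a r ∈ layerFiltration layer (layer a) := by
  intro b hb
  simp [show b ≠ a by rintro rfl; exact lt_irrefl _ hb]

variable {c : SC n} {D : Matrix (Fin n) (Fin n) ℝ}

lemma br_mem_layerFiltration (hc : ∀ i j k, c i j k ≠ 0 → layer i + layer j < layer k)
    {p q : ℕ} {x y : Fin n → ℝ} (hx : x ∈ layerFiltration layer p)
    (hy : y ∈ layerFiltration layer q) : br c x y ∈ layerFiltration layer (p + q + 1) := by
  intro k hk
  refine Finset.sum_eq_zero fun i _ => Finset.sum_eq_zero fun j _ => ?_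
  by_cases hijk : c i j k = 0
  · simp [hijk]
  have := hc i j k hijk
  rcases lt_or_ge (layer i) p with hi | hi
  · simp [hx i hi]
  · simp [hy j (by omega)]

lemma IsDeriv.col_mem_layerFiltration (hD : IsDeriv c D)
    (hc : ∀ i j k, c i j k ≠ 0 → layer i + layer j < layer k)
    (hgen : ∀ k, 0 < layer k → ∃ i j, layer i + layer j + 1 = layer k ∧
      br c (Pi.single i 1) (Pi.single j 1) = Pi.single k 1)
    (h0 : ∀ k, layer k = 0 → D.col k ∈ layerFiltration layer 1) (k : Fin n) :
    D.col k ∈ layerFiltration layer (layer k + 1) := by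
  induction hk : layer k using Nat.strong_induction_on generalizing k with
  | _ m ih =>
    rcases Nat.eq_zero_or_pos m with rfl | hm
    · exact h0 k hk
    obtain ⟨i, j, hij, hbr⟩ := hgen k (hk ▸ hm)
    have hcol : D.col k = br c (D.col i) (Pi.single j 1) + br c (Pi.single i 1) (D.col j) := by
      rw [← mulVec_single_one, ← hbr, hD, mulVec_single_one, mulVec_single_one]
    rw [hcol]
    refine add_mem
      (layerFiltration_anti ?_ (br_mem_layerFiltration hc
        (ih (layer i) (by omega) i rfl) (single_mem_layerFiltration j 1)))
      (layerFiltration_anti ?_ (br_mem_layerFiltration hc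
        (single_mem_layerFiltration i 1) (ih (layer j) (by omega) j rfl))) <;> omega

lemma mulVec_mem_layerFiltration_succ
    (hD : ∀ k, D.col k ∈ layerFiltration layer (layer k + 1)) {m : ℕ} {x : Fin n → ℝ}
    (hx : x ∈ layerFiltration layer m) : D *ᵥ x ∈ layerFiltration layer (m + 1) := by
  intro b hb
  simp only [mulVec, dotProduct]
  refine Finset.sum_eq_zero fun a _ => ?_
  rcases lt_or_ge (layer a) m with ha | ha
  · simp [hx a ha]
  · simp [show D b a = 0 from hD a b (by omega)]

lemma isNilpotent_of_col_mem_layerFiltration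
    (hD : ∀ k, D.col k ∈ layerFiltration layer (layer k + 1)) {N : ℕ} (hN : ∀ a, layer a < N) :
    IsNilpotent D := by
  refine ⟨N, ext_iff_mulVec.2 fun x => ?_⟩
  have hpow : ∀ m, (D ^ m) *ᵥ x ∈ layerFiltration layer m := by
    intro m
    induction m with
    | zero => exact fun a ha => absurd ha (Nat.not_lt_zero _)
    | succ m ih =>
      rw [pow_succ', ← mulVec_mulVec]
      exact mulVec_mem_layerFiltration_succ hD ih
  funext a
  simpa using hpow N a (hN a)

lemma layerFiltration_one_le_span_br
    (hgen : ∀ k, 0 < layer k → ∃ i j, layer i + layer j + 1 = layer k ∧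
      br c (Pi.single i 1) (Pi.single j 1) = Pi.single k 1) :
    layerFiltration layer 1 ≤ Submodule.span ℝ {z | ∃ a b : Fin n → ℝ, z = br c a b} := by
  intro x hx
  rw [← Finset.univ_sum_single x]
  refine Submodule.sum_mem _ fun k _ => ?_
  rcases Nat.eq_zero_or_pos (layer k) with hk | hk
  · simp [hx k (by omega)]
  obtain ⟨i, j, -, hbr⟩ := hgen k hk
  rw [show Pi.single k (x k) = x k • Pi.single k (1 : ℝ) by simp [← Pi.single_smul]]
  exact Submodule.smul_mem _ _ (Submodule.subset_span ⟨_, _, hbr.symm⟩)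

end LayerFiltration

lemma br_c19 (x y : Fin 12 → ℝ) : br c19 x y =
    Pi.single 3 (x 0 * y 1 - x 1 * y 0) + Pi.single 4 (x 1 * y 2 - x 2 * y 1) +
      Pi.single 5 (x 2 * y 0 - x 0 * y 2) + Pi.single 6 (x 0 * y 3 - x 3 * y 0) +
      Pi.single 7 (x 1 * y 4 - x 4 * y 1) + Pi.single 8 (x 2 * y 5 - x 5 * y 2) +
      Pi.single 9 (x 0 * y 6 - x 6 * y 0) + Pi.single 10 (x 1 * y 7 - x 7 * y 1) +
      Pi.single 11 (x 2 * y 8 - x 8 * y 2) + Pi.single 11 (x 0 * y 5 - x 5 * y 0) +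
      Pi.single 9 (x 1 * y 3 - x 3 * y 1) + Pi.single 10 (x 2 * y 4 - x 4 * y 2) := by
  simp only [c19, br_add]
  rw [br_brk (by decide), br_brk (by decide), br_brk (by decide), br_brk (by decide),
    br_brk (by decide), br_brk (by decide), br_brk (by decide), br_brk (by decide),
    br_brk (by decide), br_brk (by decide), br_brk (by decide), br_brk (by decide)]
  simp only [one_mul]

def layer19 (a : Fin 12) : ℕ := a / 3

def support19 : Finset (Fin 12 × Fin 12 × Fin 12) :=
  {(0, 1, 3), (1, 2, 4), (2, 0, 5), (0, 3, 6), (1, 4, 7), (2, 5, 8),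
    (0, 6, 9), (1, 7, 10), (2, 8, 11), (0, 5, 11), (1, 3, 9), (2, 4, 10)}

lemma c19_ne_zero {i j k : Fin 12} (h : c19 i j k ≠ 0) :
    (i, j, k) ∈ support19 ∨ (j, i, k) ∈ support19 := by
  contrapose! h
  simp only [support19, Finset.mem_insert, Finset.mem_singleton, Prod.mk.injEq, not_or] at h
  simp only [and_left_comm (a := j = _) (b := i = _)] at h
  simp [c19, brk, h]

lemma isNice_c19 : IsNice c19 :=
  isNice_of_support support19 (fun _ _ _ => c19_ne_zero) (by decide +kernel)
    (by decide +kernel)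

lemma layer19_add_lt_of_c19_ne_zero {i j k : Fin 12} (h : c19 i j k ≠ 0) :
    layer19 i + layer19 j < layer19 k := by
  have hsupp : ∀ t ∈ support19, layer19 t.1 + layer19 t.2.1 < layer19 t.2.2 := by
    decide +kernel
  rcases c19_ne_zero h with h | h
  · exact hsupp _ h
  · simpa [add_comm] using hsupp _ h

lemma exists_br_c19_eq_single (k : Fin 12) (hk : 0 < layer19 k) :
    ∃ i j, layer19 i + layer19 j + 1 = layer19 k ∧
      br c19 (Pi.single i 1) (Pi.single j 1) = Pi.single k 1 := by
  fin_cases k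
  all_goals try exact absurd hk (by decide)
  · exact ⟨0, 1, rfl, by simp [br_c19]⟩
  · exact ⟨1, 2, rfl, by simp [br_c19]⟩
  · exact ⟨2, 0, rfl, by simp [br_c19]⟩
  · exact ⟨0, 3, rfl, by simp [br_c19]⟩
  · exact ⟨1, 4, rfl, by simp [br_c19]⟩
  · exact ⟨2, 5, rfl, by simp [br_c19]⟩
  · exact ⟨0, 6, rfl, by simp [br_c19]⟩
  · exact ⟨1, 7, rfl, by simp [br_c19]⟩
  · exact ⟨2, 8, rfl, by simp [br_c19]⟩

lemma eq_zero_or_eq_one_or_eq_two_of_layer19_eq_zero :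
    ∀ a : Fin 12, layer19 a = 0 → a = 0 ∨ a = 1 ∨ a = 2 := by
  decide

lemma IsDeriv.apply_eq_zero_of_layer19_eq_zero {D : Matrix (Fin 12) (Fin 12) ℝ}
    (hD : IsDeriv c19 D) {a b : Fin 12} (ha : layer19 a = 0) (hb : layer19 b = 0) :
    D a b = 0 := by
  have E := hD.apply_single
  have e0_3_6 : D 6 6 = D 0 0 + D 3 3 := by simpa [br_c19] using E 0 3 6
  have e0_6_9 : D 9 9 = D 0 0 + D 6 6 := by simpa [br_c19] using E 0 6 9
  have e1_3_9 : D 9 9 = D 1 1 + D 3 3 := by simpa [br_c19] using E 1 3 9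
  have e1_4_7 : D 7 7 = D 1 1 + D 4 4 := by simpa [br_c19] using E 1 4 7
  have e1_7_10 : D 10 10 = D 1 1 + D 7 7 := by simpa [br_c19] using E 1 7 10
  have e2_4_10 : D 10 10 = D 2 2 + D 4 4 := by simpa [br_c19] using E 2 4 10
  have e2_5_8 : D 8 8 = D 2 2 + D 5 5 := by simpa [br_c19] using E 2 5 8
  have e2_8_11 : D 11 11 = D 2 2 + D 8 8 := by simpa [br_c19] using E 2 8 11
  have e0_5_11 : D 11 11 = D 0 0 + D 5 5 := by simpa [br_c19] using E 0 5 11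
  have h00 : D 0 0 = 0 := by linarith
  have h11 : D 1 1 = 0 := by linarith
  have h22 : D 2 2 = 0 := by linarith
  have h10 : D 1 0 = 0 := by simpa [br_c19] using (E 0 4 7).symm
  have h20 : D 2 0 = 0 := by simpa [br_c19] using (E 0 4 10).symm
  have h21 : D 2 1 = 0 := by simpa [br_c19] using (E 1 5 8).symm
  have h02 : D 0 2 = 0 := by simpa [br_c19] using (E 2 3 6).symm
  have h01 : D 0 1 = 0 := by simpa [br_c19] using (E 1 5 11).symm
  have h12 : D 1 2 = 0 := by simpa [br_c19] using (E 2 3 9).symm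
  rcases eq_zero_or_eq_one_or_eq_two_of_layer19_eq_zero a ha with rfl | rfl | rfl <;>
    rcases eq_zero_or_eq_one_or_eq_two_of_layer19_eq_zero b hb with rfl | rfl | rfl <;>
    assumption

/-- `𝔫₁` is characteristically nilpotent although its basis is nice: every derivation
maps into `[𝔫₁,𝔫₁]` and hence is nilpotent. -/
theorem statement19 :
    IsNice c19 ∧
    ∀ D : Matrix (Fin 12) (Fin 12) ℝ, IsDeriv c19 D →
      (∀ x : Fin 12 → ℝ, D.mulVec x ∈
        Submodule.span ℝ {z : Fin 12 → ℝ | ∃ a b : Fin 12 → ℝ, z = br c19 a b}) ∧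
      IsNilpotent D := by
  refine ⟨isNice_c19, fun D hD => ?_⟩
  have hcol : ∀ k, D.col k ∈ layerFiltration layer19 (layer19 k + 1) :=
    hD.col_mem_layerFiltration (fun _ _ _ => layer19_add_lt_of_c19_ne_zero)
      exists_br_c19_eq_single fun k hk a ha => hD.apply_eq_zero_of_layer19_eq_zero (by omega) hk
  refine ⟨fun x => layerFiltration_one_le_span_br exists_br_c19_eq_single
    (mulVec_mem_layerFiltration_succ hcol (m := 0) fun a ha => absurd ha (Nat.not_lt_zero _)), ?_⟩
  exact isNilpotent_of_col_mem_layerFiltration hcol (N := 4) fun a => by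
    unfold layer19
    omega

end RNPaper
end
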